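/- Let G be a finite simple graph, k ∈ ℕ, and let {P_1, P_2, P_3} be a T-triangle in B_k(G) whose edges are realized by the three distinct vertices v_1, v_2, v_3. Let W = V(G) \ {v_1, v_2, v_3}, and let R be the common restriction of P_1, P_2, P_3 to W. If P is any vertex of B_k(G) adjacent to each of P_1, P_2, P_3, then the restriction of P to W equals R. -/

import Mathlib

/-!
A stable partition is an exact cover of the vertex set, and `P ∼_u Q` only moves `u` to another
part. Hence two partitions that agree off a set `S` give every vertex outside `S` the same part up
to `S`, and they agree on which pairs of vertices outside `S` share a part.

Let `P ∼_{uᵢ} Pᵢ`. If some `uᵢ` is one of the `vⱼ`, the claim follows by going around the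
triangle. Otherwise, if two of the `uᵢ` coincide, say `u₂ = u₃ = u`, then `P₂` and `P₃` differ
both by moving `u` and by moving `v₁`, so exactly one of them puts `u` and `v₁` in a common part;
but `P₁`, reached from them by moving `v₃` resp. `v₂`, agrees with both on this. If the `uᵢ` are
distinct, then `P` and `P₁` agree off `{u₂, v₃}` and off `{u₃, v₂}`, which are disjoint, so `u₁`
has the same part in both, and then `P = P₁`.
-/

open SimpleGraph

variable {V : Type*} [Fintype V] [DecidableEq V]

/-- Delete the vertex `v` from its part: `P − v`. -/
def eraseVtx (P : Multiset (Finset V)) (v : V) : Multiset (Finset V) :=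
  P.map (fun s => s.erase v)

/-- A stable `k`-partition of `G`: a multiset of exactly `k` independent sets
(empty parts allowed) that are pairwise disjoint and whose union is `V(G)`.
(Pairwise disjointness together with covering is encoded by requiring that the
multiset sum of the parts is exactly the multiset of all vertices.) -/
def IsStablePartition (G : SimpleGraph V) (k : ℕ) (P : Multiset (Finset V)) : Prop :=
  Multiset.card P = k ∧ (P.map Finset.val).sum = (Finset.univ : Finset V).val ∧
    ∀ s ∈ P, ∀ a ∈ s, ∀ b ∈ s, ¬ G.Adj a b

/-- The Bell `k`-coloring graph of `G`. -/
def bellGraph (G : SimpleGraph V) (k : ℕ) :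
    SimpleGraph {P : Multiset (Finset V) // IsStablePartition G k P} where
  Adj P Q := P ≠ Q ∧ ∃ v : V, eraseVtx P.1 v = eraseVtx Q.1 v
  symm := by
    constructor
    rintro P Q ⟨hne, v, hv⟩
    exact ⟨hne.symm, v, hv.symm⟩
  loopless := by
    constructor
    rintro P ⟨hne, _⟩
    exact hne rfl

/-- The restriction of a partition to a set `W` of vertices: the multiset of
intersections of its parts with `W`. -/
def restrictParts (P : Multiset (Finset V)) (W : Finset V) : Multiset (Finset V) :=
  P.map (fun s => s ∩ W)

section ExactCover

variable {α : Type*}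

def IsExactCover [Fintype α] (A : Multiset (Finset α)) : Prop :=
  (A.map Finset.val).sum = (Finset.univ : Finset α).val

def SamePart (A : Multiset (Finset α)) (u w : α) : Prop :=
  ∃ p ∈ A, u ∈ p ∧ w ∈ p

theorem IsExactCover.exists_mem [Fintype α] {A : Multiset (Finset α)} (hA : IsExactCover A)
    (v : α) : ∃ p ∈ A, v ∈ p := by
  have hv : v ∈ (A.map Finset.val).sum := by
    rw [hA]
    exact Finset.mem_univ v
  obtain ⟨s, hs, hvs⟩ := Multiset.mem_join.mp hv
  obtain ⟨p, hp, rfl⟩ := Multiset.mem_map.mp hs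
  exact ⟨p, hp, hvs⟩

variable [DecidableEq α]

theorem restrictParts_eq_of_eraseVtx_eq {A B : Multiset (Finset α)} {v : α} {W : Finset α}
    (h : eraseVtx A v = eraseVtx B v) (hv : v ∉ W) :
    restrictParts A W = restrictParts B W := by
  have key : ∀ M, restrictParts M W = restrictParts (eraseVtx M v) W := by
    intro M
    simp only [restrictParts, eraseVtx, Multiset.map_map, Function.comp_def, Finset.erase_inter]
    refine Multiset.map_congr rfl fun s _ => ?_
    exact (Finset.erase_eq_of_notMem fun hs => hv (Finset.mem_inter.mp hs).2).symm
  rw [key A, key B, h]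

theorem SamePart.of_eraseVtx_eq {A B : Multiset (Finset α)} {u w x : α}
    (hA : SamePart A u w) (h : eraseVtx A x = eraseVtx B x) (hu : u ≠ x) (hw : w ≠ x) :
    SamePart B u w := by
  obtain ⟨p, hp, hup, hwp⟩ := hA
  have hmem : p.erase x ∈ eraseVtx B x := h ▸ Multiset.mem_map_of_mem _ hp
  obtain ⟨q, hq, hqp⟩ := Multiset.mem_map.mp hmem
  refine ⟨q, hq, ?_, ?_⟩
  · exact (Finset.mem_erase.mp (hqp ▸ Finset.mem_erase_of_ne_of_mem hu hup)).2
  · exact (Finset.mem_erase.mp (hqp ▸ Finset.mem_erase_of_ne_of_mem hw hwp)).2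

theorem samePart_iff_of_eraseVtx_eq {A B : Multiset (Finset α)} {u w x : α}
    (h : eraseVtx A x = eraseVtx B x) (hu : u ≠ x) (hw : w ≠ x) :
    SamePart A u w ↔ SamePart B u w :=
  ⟨fun hA => hA.of_eraseVtx_eq h hu hw, fun hB => hB.of_eraseVtx_eq h.symm hu hw⟩

variable [Fintype α]

namespace IsExactCover

theorem notMem_of_cons {p : Finset α} {A : Multiset (Finset α)} (hA : IsExactCover (p ::ₘ A))
    {v : α} (hv : v ∈ p) : ∀ s ∈ A, v ∉ s := by
  have hcount := congrArg (Multiset.count v) hA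
  rw [Multiset.map_cons, Multiset.sum_cons, Multiset.count_add,
    Multiset.count_eq_one_of_mem p.nodup hv,
    Multiset.count_eq_one_of_mem Finset.univ.nodup (Finset.mem_univ v)] at hcount
  have hnot : v ∉ (A.map Finset.val).join :=
    Multiset.count_eq_zero.mp (by simp only [Multiset.join]; omega)
  intro s hs hvs
  exact hnot (Multiset.mem_join.mpr ⟨s.val, Multiset.mem_map_of_mem _ hs, hvs⟩)

theorem eq_of_mem {A : Multiset (Finset α)} (hA : IsExactCover A) {p q : Finset α} {v : α}
    (hp : p ∈ A) (hq : q ∈ A) (hvp : v ∈ p) (hvq : v ∈ q) : p = q := by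
  by_contra hpq
  rw [← Multiset.cons_erase hp] at hA
  exact hA.notMem_of_cons hvp q ((Multiset.mem_erase_of_ne (Ne.symm hpq)).mpr hq) hvq

theorem samePart_iff {A : Multiset (Finset α)} (hA : IsExactCover A) {p : Finset α} {u : α}
    (hp : p ∈ A) (hu : u ∈ p) (w : α) : SamePart A u w ↔ w ∈ p := by
  constructor
  · rintro ⟨q, hq, huq, hwq⟩
    rwa [hA.eq_of_mem hp hq hu huq]
  · exact fun hw => ⟨p, hp, hu, hw⟩

theorem eraseVtx_cons {p : Finset α} {A : Multiset (Finset α)} (hA : IsExactCover (p ::ₘ A))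
    {u : α} (hu : u ∈ p) : eraseVtx (p ::ₘ A) u = p.erase u ::ₘ A := by
  rw [eraseVtx, Multiset.map_cons]
  congr 1
  conv_rhs => rw [← Multiset.map_id A]
  exact Multiset.map_congr rfl fun s hs => Finset.erase_eq_of_notMem (hA.notMem_of_cons hu s hs)

theorem eq_of_eraseVtx_eq_of_mem {A B : Multiset (Finset α)} (hA : IsExactCover A)
    (hB : IsExactCover B) {u : α} (h : eraseVtx A u = eraseVtx B u) {p : Finset α}
    (hpA : p ∈ A) (hpB : p ∈ B) (hu : u ∈ p) : A = B := by
  rw [← Multiset.cons_erase hpA] at hA h ⊢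
  rw [← Multiset.cons_erase hpB] at hB h ⊢
  rw [hA.eraseVtx_cons hu, hB.eraseVtx_cons hu, Multiset.cons_inj_right] at h
  rw [h]

theorem inter_eq_of_restrictParts_eq {A B : Multiset (Finset α)} (hB : IsExactCover B)
    {W : Finset α} (h : restrictParts A W = restrictParts B W) {p q : Finset α} {v : α}
    (hp : p ∈ A) (hq : q ∈ B) (hvp : v ∈ p) (hvq : v ∈ q) (hvW : v ∈ W) :
    p ∩ W = q ∩ W := by
  have hmem : p ∩ W ∈ restrictParts B W := h ▸ Multiset.mem_map_of_mem _ hp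
  obtain ⟨q', hq', hq'p⟩ := Multiset.mem_map.mp hmem
  have hvq' : v ∈ q' := (Finset.mem_inter.mp (hq'p ▸ Finset.mem_inter.mpr ⟨hvp, hvW⟩)).1
  rw [← hq'p, hB.eq_of_mem hq' hq hvq' hvq]

theorem eq_of_eraseVtx_eq_of_restrictParts_eq {A B : Multiset (Finset α)}
    (hA : IsExactCover A) (hB : IsExactCover B) {u : α} (h : eraseVtx A u = eraseVtx B u)
    {W₁ W₂ : Finset α} (h₁ : restrictParts A W₁ = restrictParts B W₁)
    (h₂ : restrictParts A W₂ = restrictParts B W₂) (hu₁ : u ∈ W₁) (hu₂ : u ∈ W₂)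
    (hW : W₁ ∪ W₂ = Finset.univ) : A = B := by
  obtain ⟨a, ha, hua⟩ := hA.exists_mem u
  obtain ⟨b, hb, hub⟩ := hB.exists_mem u
  have hab : a = b := calc
    a = a ∩ W₁ ∪ a ∩ W₂ := by rw [← Finset.inter_union_distrib_left, hW, Finset.inter_univ]
    _ = b ∩ W₁ ∪ b ∩ W₂ := by
      rw [hB.inter_eq_of_restrictParts_eq h₁ ha hb hua hub hu₁,
        hB.inter_eq_of_restrictParts_eq h₂ ha hb hua hub hu₂]
    _ = b := by rw [← Finset.inter_union_distrib_left, hW, Finset.inter_univ]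
  exact hA.eq_of_eraseVtx_eq_of_mem hB h ha (hab ▸ hb) hua

theorem samePart_iff_not_samePart {A B : Multiset (Finset α)} (hA : IsExactCover A)
    (hB : IsExactCover B) (hne : A ≠ B) {u w : α} (hu : eraseVtx A u = eraseVtx B u)
    (hw : eraseVtx A w = eraseVtx B w) (huw : u ≠ w) : SamePart A u w ↔ ¬ SamePart B u w := by
  obtain ⟨a, ha, hua⟩ := hA.exists_mem u
  obtain ⟨b, hb, hub⟩ := hB.exists_mem u
  have hab : a ≠ b := fun hab => hne (hA.eq_of_eraseVtx_eq_of_mem hB hu ha (hab ▸ hb) hua)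
  have hoff : a ∩ (Finset.univ \ {w}) = b ∩ (Finset.univ \ {w}) :=
    hB.inter_eq_of_restrictParts_eq (restrictParts_eq_of_eraseVtx_eq hw (by simp)) ha hb hua hub
      (by simpa using huw)
  have hdiff : ¬ (w ∈ a ↔ w ∈ b) := fun hiff => hab <| by
    ext z
    by_cases hz : z = w
    · rw [hz, hiff]
    · simpa [hz] using Finset.ext_iff.mp hoff z
  rw [hA.samePart_iff ha hua, hB.samePart_iff hb hub]
  tauto

theorem false_of_common_neighbor {A B C : Multiset (Finset α)} (hA : IsExactCover A)
    (hB : IsExactCover B) (hne : A ≠ B) {u w x y : α} (hu : eraseVtx A u = eraseVtx B u)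
    (hw : eraseVtx A w = eraseVtx B w) (huw : u ≠ w) (hx : eraseVtx C x = eraseVtx A x)
    (hy : eraseVtx C y = eraseVtx B y) (hux : u ≠ x) (hwx : w ≠ x) (huy : u ≠ y)
    (hwy : w ≠ y) : False := by
  have hAB := hA.samePart_iff_not_samePart hB hne hu hw huw
  have hCA := samePart_iff_of_eraseVtx_eq hx hux hwx
  have hCB := samePart_iff_of_eraseVtx_eq hy huy hwy
  tauto

theorem false_of_adj_triangle {P P₁ P₂ P₃ : Multiset (Finset α)} (hP : IsExactCover P)
    (hP₁ : IsExactCover P₁) (hP₂ : IsExactCover P₂) (hP₃ : IsExactCover P₃) (hPP₁ : P ≠ P₁)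
    (h₁₂ : P₁ ≠ P₂) (h₂₃ : P₂ ≠ P₃) (h₃₁ : P₃ ≠ P₁) {v₁ v₂ v₃ : α} (hv₁v₂ : v₁ ≠ v₂)
    (hv₁v₃ : v₁ ≠ v₃) (hv₂v₃ : v₂ ≠ v₃) (hv₃ : eraseVtx P₁ v₃ = eraseVtx P₂ v₃)
    (hv₁ : eraseVtx P₂ v₁ = eraseVtx P₃ v₁) (hv₂ : eraseVtx P₃ v₂ = eraseVtx P₁ v₂)
    {u₁ u₂ u₃ : α} (e₁ : eraseVtx P u₁ = eraseVtx P₁ u₁) (e₂ : eraseVtx P u₂ = eraseVtx P₂ u₂)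
    (e₃ : eraseVtx P u₃ = eraseVtx P₃ u₃) (hu₁ : u₁ ∉ ({v₁, v₂, v₃} : Finset α))
    (hu₂ : u₂ ∉ ({v₁, v₂, v₃} : Finset α)) (hu₃ : u₃ ∉ ({v₁, v₂, v₃} : Finset α)) : False := by
  simp only [Finset.mem_insert, Finset.mem_singleton, not_or] at hu₁ hu₂ hu₃
  obtain rfl | hu₂₃ := eq_or_ne u₂ u₃
  · exact hP₂.false_of_common_neighbor hP₃ h₂₃ (e₂.symm.trans e₃) hv₁
      hu₂.1 hv₃ hv₂.symm hu₂.2.2 hv₁v₃ hu₂.2.1 hv₁v₂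
  obtain rfl | hu₁₂ := eq_or_ne u₁ u₂
  · exact hP₁.false_of_common_neighbor hP₂ h₁₂ (e₁.symm.trans e₂) hv₃
      hu₁.2.2 hv₂ hv₁.symm hu₁.2.1 hv₂v₃.symm hu₁.1 hv₁v₃.symm
  obtain rfl | hu₁₃ := eq_or_ne u₁ u₃
  · exact hP₃.false_of_common_neighbor hP₁ h₃₁ (e₃.symm.trans e₁) hv₂
      hu₁.2.1 hv₁ hv₃.symm hu₁.1 hv₁v₂.symm hu₁.2.2 hv₂v₃
  have off₁ :
      restrictParts P (Finset.univ \ {u₂, v₃}) = restrictParts P₁ (Finset.univ \ {u₂, v₃}) :=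
    (restrictParts_eq_of_eraseVtx_eq e₂ (by simp)).trans
      (restrictParts_eq_of_eraseVtx_eq hv₃.symm (by simp))
  have off₂ :
      restrictParts P (Finset.univ \ {u₃, v₂}) = restrictParts P₁ (Finset.univ \ {u₃, v₂}) :=
    (restrictParts_eq_of_eraseVtx_eq e₃ (by simp)).trans
      (restrictParts_eq_of_eraseVtx_eq hv₂ (by simp))
  refine hPP₁ (hP.eq_of_eraseVtx_eq_of_restrictParts_eq hP₁ e₁ off₁ off₂
    (by simp [hu₁₂, hu₁.2.2]) (by simp [hu₁₃, hu₁.2.1]) ?_)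
  rw [← Finset.sdiff_inter_distrib_right, Finset.sdiff_eq_self_iff_disjoint]
  refine Finset.disjoint_left.mpr fun z _ hz => ?_
  simp only [Finset.mem_inter, Finset.mem_insert, Finset.mem_singleton] at hz
  grind

end IsExactCover

end ExactCover

theorem TTriangle_fourth_vertex_general (G : SimpleGraph V) (k : ℕ)
    (P₁ P₂ P₃ : {P : Multiset (Finset V) // IsStablePartition G k P})
    (h12 : (bellGraph G k).Adj P₁ P₂) (h23 : (bellGraph G k).Adj P₂ P₃)
    (h31 : (bellGraph G k).Adj P₃ P₁)
    (v₁ v₂ v₃ : V) (h12' : v₁ ≠ v₂) (h13' : v₁ ≠ v₃) (h23' : v₂ ≠ v₃)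
    (hv₃ : eraseVtx P₁.1 v₃ = eraseVtx P₂.1 v₃)
    (hv₁ : eraseVtx P₂.1 v₁ = eraseVtx P₃.1 v₁)
    (hv₂ : eraseVtx P₃.1 v₂ = eraseVtx P₁.1 v₂)
    (P : {P : Multiset (Finset V) // IsStablePartition G k P})
    (hP1 : (bellGraph G k).Adj P P₁) (hP2 : (bellGraph G k).Adj P P₂)
    (hP3 : (bellGraph G k).Adj P P₃) :
    restrictParts P.1 (Finset.univ \ {v₁, v₂, v₃}) =
      restrictParts P₁.1 (Finset.univ \ {v₁, v₂, v₃}) := by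
  have ne {Q Q' : {P : Multiset (Finset V) // IsStablePartition G k P}}
      (h : (bellGraph G k).Adj Q Q') : Q.1 ≠ Q'.1 := fun hQ => h.1 (Subtype.ext hQ)
  have off {A B : Multiset (Finset V)} {v : V} (h : eraseVtx A v = eraseVtx B v)
      (hv : v ∈ ({v₁, v₂, v₃} : Finset V)) :
      restrictParts A (Finset.univ \ {v₁, v₂, v₃}) = restrictParts B (Finset.univ \ {v₁, v₂, v₃}) :=
    restrictParts_eq_of_eraseVtx_eq h (by simp [hv])
  obtain ⟨u₁, e₁⟩ := hP1.2
  obtain ⟨u₂, e₂⟩ := hP2.2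
  obtain ⟨u₃, e₃⟩ := hP3.2
  by_cases hu₁ : u₁ ∈ ({v₁, v₂, v₃} : Finset V)
  · exact off e₁ hu₁
  by_cases hu₂ : u₂ ∈ ({v₁, v₂, v₃} : Finset V)
  · exact (off e₂ hu₂).trans (off hv₃.symm (by simp))
  by_cases hu₃ : u₃ ∈ ({v₁, v₂, v₃} : Finset V)
  · exact (off e₃ hu₃).trans (off hv₂ (by simp))
  exact (IsExactCover.false_of_adj_triangle P.2.2.1 P₁.2.2.1 P₂.2.2.1 P₃.2.2.1 (ne hP1)
    (ne h12) (ne h23) (ne h31) h12' h13' h23' hv₃ hv₁ hv₂ e₁ e₂ e₃ hu₁ hu₂ hu₃).elim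

/-- **Rigidity of T-triangles.** Let `{P₁, P₂, P₃}` be a T-triangle in
`B_k(G)` whose edges are realized by distinct vertices `v₁, v₂, v₃` (with `vᵢ`
realizing the edge not incident to `Pᵢ`), and let `W = V(G) \ {v₁, v₂, v₃}`.
If `P` is adjacent in `B_k(G)` to each of `P₁, P₂, P₃`, then the restriction of
`P` to `W` equals the common restriction `R` of the `Pᵢ` to `W`. -/
theorem TTriangle_fourth_vertex (G : SimpleGraph V) (k : ℕ)
    (P₁ P₂ P₃ : {P : Multiset (Finset V) // IsStablePartition G k P})
    (h12 : (bellGraph G k).Adj P₁ P₂) (h23 : (bellGraph G k).Adj P₂ P₃)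
    (h31 : (bellGraph G k).Adj P₃ P₁)
    (v₁ v₂ v₃ : V) (h12' : v₁ ≠ v₂) (h13' : v₁ ≠ v₃) (h23' : v₂ ≠ v₃)
    (hv₃ : eraseVtx P₁.1 v₃ = eraseVtx P₂.1 v₃)
    (hv₁ : eraseVtx P₂.1 v₁ = eraseVtx P₃.1 v₁)
    (hv₂ : eraseVtx P₃.1 v₂ = eraseVtx P₁.1 v₂)
    (hT : ¬ ∃ u : V, eraseVtx P₁.1 u = eraseVtx P₂.1 u ∧
        eraseVtx P₂.1 u = eraseVtx P₃.1 u ∧ eraseVtx P₃.1 u = eraseVtx P₁.1 u)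
    (P : {P : Multiset (Finset V) // IsStablePartition G k P})
    (hP1 : (bellGraph G k).Adj P P₁) (hP2 : (bellGraph G k).Adj P P₂)
    (hP3 : (bellGraph G k).Adj P P₃) :
    restrictParts P.1 (Finset.univ \ {v₁, v₂, v₃}) =
      restrictParts P₁.1 (Finset.univ \ {v₁, v₂, v₃}) :=
  TTriangle_fourth_vertex_general G k P₁ P₂ P₃ h12 h23 h31 v₁ v₂ v₃ h12' h13' h23' hv₃ hv₁ hv₂ P hP1
    hP2 hP3
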